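/- arXiv:2105.03743 — 4 statements merged into one kernel-verified Lean document; each statement's English description precedes it below -/
import Mathlib

section
/- Let Ω be a finite probability space of k-element subsets H of {1,...,h} with the uniform distribution, let f be any function from masked texts to labels, and let x, x' be texts of common length h with D = {i : x_i ≠ x'_i} satisfying |D| ≤ d. Define p_c(x) = P(f(M(x,H)) = c) and p_c(x') = P(f(M(x',H)) = c), where M(x,H) masks all coordinates of x outside H. Let β = P(f(M(x,H)) = c | H ∩ D ≠ ∅) (taken to be 0 if P(H ∩ D ≠ ∅) = 0), and Δ = 1 - C(h-d,k)/C(h,k). Then p_c(x) - p_c(x') ≤ β·Δ. -/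
/-- A text of length `h` over word alphabet `W` is a function `Fin h → W`; masking keeps the
words at indices in `H` and replaces all others with the special `MASK` symbol (`none`). -/
def maskText {W : Type} {h : ℕ} (y : Fin h → W) (H : Finset (Fin h)) : Fin h → Option W :=
  fun i => if i ∈ H then some (y i) else none

/-- Theorem 1 of the paper: with `H` a uniformly random `k`-subset of the `h` indices,
`p_c(x) = P(f(M(x,H)) = c)`, `D = x ⊖ x'` with `|D| ≤ d`,
`β = P(f(M(x,H)) = c | H ∩ D ≠ ∅)` (which is `0` when the conditioning event has
probability `0`, by the convention `a / 0 = 0`), and `Δ = 1 - C(h-d,k)/C(h,k)`,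
we have `p_c(x) - p_c(x') ≤ β·Δ`. -/
theorem stmt_3 {W Y : Type} [DecidableEq W] [DecidableEq Y]
    (h k d : ℕ) (hk : k ≤ h) (hd : d ≤ h)
    (f : (Fin h → Option W) → Y) (c : Y) (x x' : Fin h → W)
    (hdiff : (Finset.univ.filter (fun i => x i ≠ x' i)).card ≤ d) :
    let Ω := Finset.powersetCard k (Finset.univ : Finset (Fin h))
    let D := Finset.univ.filter (fun i => x i ≠ x' i)
    let p := fun (y : Fin h → W) =>
      ((Ω.filter (fun H => f (maskText y H) = c)).card : ℚ) / (Ω.card : ℚ)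
    let β := ((Ω.filter (fun H => f (maskText x H) = c ∧ (H ∩ D).Nonempty)).card : ℚ) /
      ((Ω.filter (fun H => (H ∩ D).Nonempty)).card : ℚ)
    let Δ := 1 - (Nat.choose (h - d) k : ℚ) / (Nat.choose h k : ℚ)
    p x - p x' ≤ β * Δ := by
  intro Ω D p β Δ
  have hΩcard : Ω.card = h.choose k := by
    simp [Ω, Finset.card_powersetCard]
  have hΩpos : 0 < ((h.choose k : ℕ) : ℚ) := by exact_mod_cast Nat.choose_pos hk
  set S := Ω.filter (fun H => f (maskText x H) = c ∧ (H ∩ D).Nonempty) with hSdef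
  set N := Ω.filter (fun H => (H ∩ D).Nonempty) with hNdef
  have hmask : ∀ H, ¬(H ∩ D).Nonempty → maskText x H = maskText x' H := by
    intro H hne
    funext i
    unfold maskText
    by_cases hi : i ∈ H
    · simp only [hi, if_true, Option.some.injEq]
      by_contra hxx
      exact hne ⟨i, Finset.mem_inter.mpr ⟨hi, by simp [D, hxx]⟩⟩
    · simp [hi]
  have claim1 : (Ω.filter (fun H => f (maskText x H) = c)).card ≤
      (Ω.filter (fun H => f (maskText x' H) = c)).card + S.card := by
    calc (Ω.filter (fun H => f (maskText x H) = c)).card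
        ≤ ((Ω.filter (fun H => f (maskText x' H) = c)) ∪ S).card := by
          apply Finset.card_le_card
          intro H hH
          rw [Finset.mem_filter] at hH
          by_cases hne : (H ∩ D).Nonempty
          · exact Finset.mem_union_right _ (Finset.mem_filter.mpr ⟨hH.1, hH.2, hne⟩)
          · exact Finset.mem_union_left _ (Finset.mem_filter.mpr
              ⟨hH.1, by rw [← hmask H hne]; exact hH.2⟩)
      _ ≤ _ := Finset.card_union_le _ _
  have hSN : S ⊆ N := by
    intro H hH
    rw [hSdef, Finset.mem_filter] at hH
    rw [hNdef, Finset.mem_filter]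
    exact ⟨hH.1, hH.2.2⟩
  -- claim2 : N.card ≤ h.choose k - (h-d).choose k
  have hcompl : Ω.filter (fun H => ¬(H ∩ D).Nonempty) = Finset.powersetCard k Dᶜ := by
    ext H
    simp only [Ω, Finset.mem_filter, Finset.mem_powersetCard, Finset.subset_univ, true_and,
      Finset.not_nonempty_iff_eq_empty, ← Finset.disjoint_iff_inter_eq_empty]
    constructor
    · rintro ⟨hcard, hdis⟩
      exact ⟨fun i hi => Finset.mem_compl.mpr (Finset.disjoint_left.mp hdis hi), hcard⟩
    · rintro ⟨hsub, hcard⟩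
      exact ⟨hcard, Finset.disjoint_left.mpr fun i hi hid => Finset.mem_compl.mp (hsub hi) hid⟩
  have hcomplcard : (Ω.filter (fun H => ¬(H ∩ D).Nonempty)).card = (h - D.card).choose k := by
    rw [hcompl, Finset.card_powersetCard, Finset.card_compl, Fintype.card_fin]
  have hNsum : N.card + (h - D.card).choose k = h.choose k := by
    rw [← hcomplcard, ← hΩcard, hNdef]
    exact Finset.card_filter_add_card_filter_not _
  have hchoosemono : (h - d).choose k ≤ (h - D.card).choose k :=
    Nat.choose_le_choose k (Nat.sub_le_sub_left hdiff h)
  have claim2 : N.card + (h - d).choose k ≤ h.choose k := by omega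
  have hchle : (h - d).choose k ≤ h.choose k := by omega
  -- rational versions
  have hΔ : Δ = ((h.choose k : ℚ) - ((h - d).choose k : ℚ)) / (h.choose k : ℚ) := by
    show 1 - ((h - d).choose k : ℚ) / (h.choose k : ℚ) = _
    rw [sub_div, div_self (ne_of_gt hΩpos)]
  have hΔnonneg : 0 ≤ Δ := by
    rw [hΔ]
    apply div_nonneg _ (le_of_lt hΩpos)
    have : (((h - d).choose k : ℕ) : ℚ) ≤ ((h.choose k : ℕ) : ℚ) := by exact_mod_cast hchle
    linarith
  have hNle : (N.card : ℚ) ≤ Δ * (h.choose k : ℚ) := by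
    rw [hΔ, div_mul_cancel₀ _ (ne_of_gt hΩpos)]
    have : ((N.card + (h - d).choose k : ℕ) : ℚ) ≤ ((h.choose k : ℕ) : ℚ) := by
      exact_mod_cast claim2
    push_cast at this
    linarith
  -- Step 1: p x - p x' ≤ S.card / Ω.card
  have step1 : p x - p x' ≤ (S.card : ℚ) / (Ω.card : ℚ) := by
    simp only [p]
    rw [div_sub_div_same, div_le_div_iff₀ (by rw [hΩcard]; exact hΩpos) (by rw [hΩcard]; exact hΩpos)]
    have : ((Ω.filter (fun H => f (maskText x H) = c)).card : ℚ) ≤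
        ((Ω.filter (fun H => f (maskText x' H) = c)).card : ℚ) + (S.card : ℚ) := by
      exact_mod_cast claim1
    nlinarith [hΩpos, hΩcard]
  -- Step 2: S.card / Ω.card ≤ β * Δ
  have step2 : (S.card : ℚ) / (Ω.card : ℚ) ≤ β * Δ := by
    by_cases hN0 : N.card = 0
    · have hS0 : S.card = 0 := Nat.eq_zero_of_le_zero (hN0 ▸ Finset.card_le_card hSN)
      simp [β, hS0, ← hNdef, ← hSdef, hN0]
    · have hNpos : 0 < (N.card : ℚ) := by exact_mod_cast Nat.pos_of_ne_zero hN0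
      have hβ : β = (S.card : ℚ) / (N.card : ℚ) := rfl
      rw [hΩcard, hβ]
      rw [div_le_iff₀ hΩpos, div_mul_eq_mul_div, div_mul_eq_mul_div, le_div_iff₀ hNpos]
      have hScard : (S.card : ℚ) ≤ (N.card : ℚ) := by
        exact_mod_cast Finset.card_le_card hSN
      nlinarith [hNle, Nat.cast_nonneg (α := ℚ) S.card]
  exact le_trans step1 step2
end

section
/- Under the setting of the randomized-masking smoothed classifier, if p_c(x) - β·Δ > 1/2 where β = P(f(M(x,H)) = c | H ∩ (x ⊖ x') ≠ ∅) and Δ = 1 - C(h-d,k)/C(h,k), then for every text x' with Hamming distance at most d from x, p_c(x') > 1/2, and hence the class c strictly maximizes p_{c'}(x') over all classes c' ∈ Y (in particular c is the unique argmax) whenever the label set Y has at least 2 elements. -/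
/-- Corollary 1 (certification): if `p_c(x) - β·Δ > 1/2`, where
`β = P(f(M(x,H)) = c | H ∩ (x ⊖ x') ≠ ∅)` and `Δ = 1 - C(h-d,k)/C(h,k)`, then for every
text `x'` within Hamming distance `d` of `x` we have `p_c(x') > 1/2`; hence (the label set
having at least two elements) `c` strictly maximizes `c' ↦ p_{c'}(x')`, i.e. `c` is the
unique argmax of the smoothed classifier at `x'`. -/
theorem stmt_4 {W Y : Type} [DecidableEq W] [DecidableEq Y] [Fintype Y]
    (hY : 2 ≤ Fintype.card Y)
    (h k d : ℕ) (hk : k ≤ h) (hd : d ≤ h)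
    (f : (Fin h → Option W) → Y) (c : Y) (x : Fin h → W) :
    let Ω := Finset.powersetCard k (Finset.univ : Finset (Fin h))
    let p := fun (y : Fin h → W) (c' : Y) =>
      ((Ω.filter (fun H => f (maskText y H) = c')).card : ℚ) / (Ω.card : ℚ)
    let Δ := 1 - (Nat.choose (h - d) k : ℚ) / (Nat.choose h k : ℚ)
    ∀ x' : Fin h → W,
      (Finset.univ.filter (fun i => x i ≠ x' i)).card ≤ d →
      (let D := Finset.univ.filter (fun i => x i ≠ x' i)
       let β := ((Ω.filter (fun H => f (maskText x H) = c ∧ (H ∩ D).Nonempty)).card : ℚ) /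
         ((Ω.filter (fun H => (H ∩ D).Nonempty)).card : ℚ)
       p x c - β * Δ > 1 / 2) →
      p x' c > 1 / 2 ∧ ∀ c' : Y, c' ≠ c → p x' c' < p x' c := by
  intro Ω p Δ x' hdist hyp
  classical
  set D : Finset (Fin h) := Finset.univ.filter (fun i => x i ≠ x' i) with hDdef
  set A : Finset (Finset (Fin h)) := Ω.filter (fun H => f (maskText x H) = c) with hAdef
  set A' : Finset (Finset (Fin h)) := Ω.filter (fun H => f (maskText x' H) = c) with hA'def
  set B : Finset (Finset (Fin h)) :=
    Ω.filter (fun H => f (maskText x H) = c ∧ (H ∩ D).Nonempty) with hBdef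
  set S : Finset (Finset (Fin h)) := Ω.filter (fun H => (H ∩ D).Nonempty) with hSdef
  have hΩcard : Ω.card = Nat.choose h k := by
    simp [Ω, Finset.card_powersetCard]
  have hNpos : 0 < Nat.choose h k := Nat.choose_pos hk
  have hNQ : (0:ℚ) < (Nat.choose h k : ℚ) := by exact_mod_cast hNpos
  -- mask equality on sets disjoint from D
  have maskeq : ∀ H : Finset (Fin h), H ∩ D = ∅ → maskText x H = maskText x' H := by
    intro H hHD
    funext i
    unfold maskText
    by_cases hi : i ∈ H
    · simp only [hi, if_true]
      have hiD : i ∉ D := by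
        intro hiD
        have : i ∈ H ∩ D := Finset.mem_inter.mpr ⟨hi, hiD⟩
        simp [hHD] at this
      have : ¬ (x i ≠ x' i) := by simpa [hDdef] using hiD
      simp [not_not.mp this]
    · simp [hi]
  have hBA : B ⊆ A := by
    intro H hH
    simp only [hBdef, hAdef, Finset.mem_filter] at hH ⊢
    exact ⟨hH.1, hH.2.1⟩
  have hBS : B ⊆ S := by
    intro H hH
    simp only [hBdef, hSdef, Finset.mem_filter] at hH ⊢
    exact ⟨hH.1, hH.2.2⟩
  have hsub : A \ B ⊆ A' := by
    intro H hH
    simp only [Finset.mem_sdiff, hAdef, hBdef, hA'def, Finset.mem_filter] at hH ⊢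
    obtain ⟨⟨hHΩ, hfc⟩, hnB⟩ := hH
    have hempty : H ∩ D = ∅ := by
      by_contra hne
      exact hnB ⟨hHΩ, hfc, Finset.nonempty_iff_ne_empty.mpr hne⟩
    refine ⟨hHΩ, ?_⟩
    rw [← maskeq H hempty]
    exact hfc
  have hcount : A.card ≤ A'.card + B.card := by
    have h1 : A.card - B.card ≤ A'.card := by
      rw [← Finset.card_sdiff_of_subset hBA]
      exact Finset.card_le_card hsub
    omega
  -- count of sets disjoint from D
  have hdisjset : Ω.filter (fun H => H ∩ D = ∅) = Finset.powersetCard k Dᶜ := by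
    ext H
    simp only [Finset.mem_filter, Finset.mem_powersetCard, Ω]
    constructor
    · rintro ⟨⟨-, hcard⟩, hHD⟩
      refine ⟨?_, hcard⟩
      intro i hi
      simp only [Finset.mem_compl]
      intro hiD
      have : i ∈ H ∩ D := Finset.mem_inter.mpr ⟨hi, hiD⟩
      simp [hHD] at this
    · rintro ⟨hHsub, hcard⟩
      refine ⟨⟨Finset.subset_univ _, hcard⟩, ?_⟩
      rw [Finset.eq_empty_iff_forall_notMem]
      intro i hi
      rw [Finset.mem_inter] at hi
      exact (Finset.mem_compl.mp (hHsub hi.1)) hi.2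
  have hdisjcard : (Ω.filter (fun H => H ∩ D = ∅)).card = Nat.choose (h - D.card) k := by
    rw [hdisjset, Finset.card_powersetCard, Finset.card_compl, Fintype.card_fin]
  have hScard : S.card = Nat.choose h k - Nat.choose (h - D.card) k := by
    have hSeq : S = Ω \ (Ω.filter (fun H => H ∩ D = ∅)) := by
      rw [← Finset.filter_not]
      apply Finset.filter_congr
      intro H _
      simp [Finset.nonempty_iff_ne_empty]
    rw [hSeq, Finset.card_sdiff_of_subset (Finset.filter_subset _ _), hΩcard, hdisjcard]
  have hDd : D.card ≤ d := hdist
  have hchoose_mono : Nat.choose (h - d) k ≤ Nat.choose (h - D.card) k :=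
    Nat.choose_le_choose k (by omega)
  have hchoose_le : Nat.choose (h - d) k ≤ Nat.choose h k :=
    Nat.choose_le_choose k (by omega)
  have hS_le : S.card ≤ Nat.choose h k - Nat.choose (h - d) k := by
    rw [hScard]; omega
  -- rational inequality: β * Δ ≥ B.card / (h.choose k)
  have hβΔ : (B.card : ℚ) / (Nat.choose h k : ℚ) ≤
      ((B.card : ℚ) / (S.card : ℚ)) * Δ := by
    have hΔ : Δ = ((Nat.choose h k - Nat.choose (h - d) k : ℕ) : ℚ) / (Nat.choose h k : ℚ) := by
      show (1 : ℚ) - _ = _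
      rw [Nat.cast_sub hchoose_le]
      field_simp
    by_cases hS0 : S.card = 0
    · have hB0 : B.card = 0 := by
        have := Finset.card_le_card hBS
        omega
      simp [hB0]
    · have hSQ : (0:ℚ) < (S.card : ℚ) := by
        have : 0 < S.card := Nat.pos_of_ne_zero hS0
        exact_mod_cast this
      have hSN : (S.card : ℚ) ≤ ((Nat.choose h k - Nat.choose (h - d) k : ℕ) : ℚ) := by
        exact_mod_cast hS_le
      rw [hΔ]
      have key : (B.card:ℚ)/(Nat.choose h k : ℚ)
          = ((B.card:ℚ)/(S.card:ℚ)) * ((S.card:ℚ)/(Nat.choose h k : ℚ)) := by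
        field_simp
      rw [key]
      have hstep : (S.card:ℚ)/(Nat.choose h k : ℚ) ≤
          ((Nat.choose h k - Nat.choose (h - d) k : ℕ) : ℚ) / (Nat.choose h k : ℚ) := by
        gcongr
      have hnn : (0:ℚ) ≤ (B.card:ℚ)/(S.card:ℚ) := by positivity
      exact mul_le_mul_of_nonneg_left hstep hnn
  have hyp2 : (A.card:ℚ)/(Ω.card:ℚ) - ((B.card:ℚ)/(S.card:ℚ)) * Δ > 1/2 := hyp
  have hA'B : (A.card:ℚ) ≤ (A'.card:ℚ) + (B.card:ℚ) := by exact_mod_cast hcount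
  have hfirst : (A'.card:ℚ)/(Ω.card:ℚ) > 1/2 := by
    rw [hΩcard] at hyp2 ⊢
    calc (1:ℚ)/2 < (A.card:ℚ)/(Nat.choose h k : ℚ) - ((B.card:ℚ)/(S.card:ℚ)) * Δ := hyp2
      _ ≤ (A.card:ℚ)/(Nat.choose h k : ℚ) - (B.card:ℚ)/(Nat.choose h k : ℚ) := by
          linarith [hβΔ]
      _ = ((A.card:ℚ) - (B.card:ℚ))/(Nat.choose h k : ℚ) := by ring
      _ ≤ (A'.card:ℚ)/(Nat.choose h k : ℚ) := by
          gcongr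
          linarith
  refine ⟨hfirst, ?_⟩
  intro c' hc'
  show ((Ω.filter (fun H => f (maskText x' H) = c')).card : ℚ) / (Ω.card : ℚ)
      < ((Ω.filter (fun H => f (maskText x' H) = c)).card : ℚ) / (Ω.card : ℚ)
  have hdisj2 : Ω.filter (fun H => f (maskText x' H) = c') ⊆ Ω \ A' := by
    intro H hH
    simp only [Finset.mem_filter, Finset.mem_sdiff, hA'def] at hH ⊢
    exact ⟨hH.1, fun hcon => hc' (hH.2 ▸ hcon.2.symm ▸ rfl)⟩
  have hcardle : (Ω.filter (fun H => f (maskText x' H) = c')).card ≤ Ω.card - A'.card :=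
    le_trans (Finset.card_le_card hdisj2)
      (le_of_eq (Finset.card_sdiff_of_subset (Finset.filter_subset _ _)))
  have hA'le : A'.card ≤ Ω.card := Finset.card_le_card (Finset.filter_subset _ _)
  have hΩQ : (0:ℚ) < (Ω.card:ℚ) := by rw [hΩcard]; exact hNQ
  have hhalf : (1:ℚ)/2 * (Ω.card:ℚ) < (A'.card:ℚ) := (lt_div_iff₀ hΩQ).mp hfirst
  have hc'le : ((Ω.filter (fun H => f (maskText x' H) = c')).card : ℚ)
      ≤ (Ω.card:ℚ) - (A'.card:ℚ) := by
    have := hcardle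
    have h2 : ((Ω.filter (fun H => f (maskText x' H) = c')).card : ℚ)
        ≤ ((Ω.card - A'.card : ℕ) : ℚ) := by exact_mod_cast this
    rwa [Nat.cast_sub hA'le] at h2
  have hlt : ((Ω.filter (fun H => f (maskText x' H) = c')).card : ℚ) < (A'.card:ℚ) := by
    linarith
  exact (div_lt_div_iff_of_pos_right hΩQ).mpr hlt
end

section
/- Let p ∈ [0,1], h ≥ 1, k ≤ h, d ≤ h - k. If Δ = 1 - C(h-d,k)/C(h,k) and p - Δ > 1/2, then for any x' within Hamming distance d of x and any classifier f as in Theorem 1 with p_c(x) ≥ p, we have p_c(x') ≥ p - Δ > 1/2. -/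
/-- The `β = 1` (Levine–Feizi style) specialization: with `Δ = 1 - C(h-d,k)/C(h,k)` and
`p - Δ > 1/2`, for any classifier `f` with `p_c(x) ≥ p` and any `x'` within Hamming
distance `d` of `x`, we have `p_c(x') ≥ p - Δ > 1/2`. -/
theorem stmt_8 {W Y : Type} [DecidableEq W] [DecidableEq Y]
    (p : ℚ) (hp : p ∈ Set.Icc (0 : ℚ) 1)
    (h k d : ℕ) (hh : 1 ≤ h) (hk : k ≤ h) (hd : d ≤ h - k)
    (f : (Fin h → Option W) → Y) (c : Y) (x x' : Fin h → W)
    (hΔ : p - (1 - (Nat.choose (h - d) k : ℚ) / (Nat.choose h k : ℚ)) > 1 / 2)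
    (hdiff : (Finset.univ.filter (fun i => x i ≠ x' i)).card ≤ d)
    (hpc : p ≤ (((Finset.powersetCard k (Finset.univ : Finset (Fin h))).filter
        (fun H => f (maskText x H) = c)).card : ℚ) /
        ((Finset.powersetCard k (Finset.univ : Finset (Fin h))).card : ℚ)) :
    p - (1 - (Nat.choose (h - d) k : ℚ) / (Nat.choose h k : ℚ))
        ≤ (((Finset.powersetCard k (Finset.univ : Finset (Fin h))).filter
            (fun H => f (maskText x' H) = c)).card : ℚ) /
          ((Finset.powersetCard k (Finset.univ : Finset (Fin h))).card : ℚ) ∧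
      (1 : ℚ) / 2 < (((Finset.powersetCard k (Finset.univ : Finset (Fin h))).filter
            (fun H => f (maskText x' H) = c)).card : ℚ) /
          ((Finset.powersetCard k (Finset.univ : Finset (Fin h))).card : ℚ) := by
  classical
  set S := Finset.powersetCard k (Finset.univ : Finset (Fin h)) with hS
  set A := S.filter (fun H => f (maskText x H) = c) with hA
  set B := S.filter (fun H => f (maskText x' H) = c) with hB
  set D := Finset.univ.filter (fun i => x i ≠ x' i) with hD
  have hScard : S.card = Nat.choose h k := by
    simp [hS, Finset.card_powersetCard]
  have hSpos : 0 < S.card := by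
    rw [hScard]; exact Nat.choose_pos hk
  -- the set of k-subsets disjoint from D
  set T := Finset.powersetCard k ((Finset.univ : Finset (Fin h)) \ D) with hT
  have hTsub : T ⊆ S := Finset.powersetCard_mono (Finset.subset_univ _)
  have hTcard : Nat.choose (h - d) k ≤ T.card := by
    rw [hT, Finset.card_powersetCard, Finset.card_sdiff_of_subset (Finset.subset_univ _),
      Finset.card_univ, Fintype.card_fin]
    exact Nat.choose_le_choose k (Nat.sub_le_sub_left hdiff h)
  -- key inclusion: A ⊆ B ∪ (S \ T)
  have hkey : A ⊆ B ∪ (S \ T) := by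
    intro H hH
    rw [hA, Finset.mem_filter] at hH
    by_cases hHT : H ∈ T
    · apply Finset.mem_union_left
      rw [hB, Finset.mem_filter]
      refine ⟨hH.1, ?_⟩
      have : maskText x H = maskText x' H := by
        funext i
        unfold maskText
        by_cases hi : i ∈ H
        · simp only [hi, if_true]
          rw [hT, Finset.mem_powersetCard] at hHT
          have := hHT.1 hi
          rw [Finset.mem_sdiff, hD, Finset.mem_filter] at this
          have : ¬ (x i ≠ x' i) := fun hne => this.2 ⟨Finset.mem_univ i, hne⟩
          simp [not_not.mp this]
        · simp [hi]
      rw [← this]; exact hH.2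
    · exact Finset.mem_union_right _ (Finset.mem_sdiff.mpr ⟨hH.1, hHT⟩)
  have hcard : A.card ≤ B.card + (S.card - T.card) := by
    calc A.card ≤ (B ∪ (S \ T)).card := Finset.card_le_card hkey
    _ ≤ B.card + (S \ T).card := Finset.card_union_le _ _
    _ = B.card + (S.card - T.card) := by rw [Finset.card_sdiff_of_subset hTsub]
  -- rational arithmetic
  have hTS : T.card ≤ S.card := Finset.card_le_card hTsub
  have hNpos : (0 : ℚ) < (S.card : ℚ) := by exact_mod_cast hSpos
  have hq : (A.card : ℚ) ≤ (B.card : ℚ) + ((S.card : ℚ) - (Nat.choose (h - d) k : ℚ)) := by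
    have h1 : (A.card : ℚ) ≤ (B.card : ℚ) + ((S.card : ℚ) - (T.card : ℚ)) := by
      have := hcard
      have h2 : (A.card : ℚ) ≤ ((B.card + (S.card - T.card) : ℕ) : ℚ) := by exact_mod_cast this
      rwa [Nat.cast_add, Nat.cast_sub hTS] at h2
    have h3 : (Nat.choose (h - d) k : ℚ) ≤ (T.card : ℚ) := by exact_mod_cast hTcard
    linarith
  have hmain : p - (1 - (Nat.choose (h - d) k : ℚ) / (Nat.choose h k : ℚ))
      ≤ (B.card : ℚ) / (S.card : ℚ) := by
    rw [← hScard]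
    have hpcA : p * (S.card : ℚ) ≤ (A.card : ℚ) := (le_div_iff₀ hNpos).mp hpc
    have hCS : (Nat.choose (h - d) k : ℚ) / (S.card : ℚ) * (S.card : ℚ)
        = (Nat.choose (h - d) k : ℚ) := div_mul_cancel₀ _ (ne_of_gt hNpos)
    rw [le_div_iff₀ hNpos]
    nlinarith [hq, hpcA, hCS]
  refine ⟨by rwa [hScard] at hmain ⊢, ?_⟩
  calc (1:ℚ)/2 < p - (1 - (Nat.choose (h - d) k : ℚ) / (Nat.choose h k : ℚ)) := hΔ
  _ ≤ _ := by rwa [hScard] at hmain ⊢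
end

section
/- Suppose the label set Y is finite with |Y| = m ≥ 2, and for a text x the smoothed probabilities satisfy p_c(x) ≥ p for the true class c. If p - Δ > 1/2 with Δ = 1 - C(h-d,k)/C(h,k), then for every x' with ‖x - x'‖₀ ≤ d and every class c' ≠ c, p_{c'}(x') ≤ 1 - p + Δ < 1/2 < p_c(x'), so the smoothed classifier's argmax at x' is c. -/
/-- Robust classification: with `|Y| = m ≥ 2`, if the smoothed probability of the true
class satisfies `p_c(x) ≥ p` and `p - Δ > 1/2` (where `Δ = 1 - C(h-d,k)/C(h,k)`), then for
every `x'` with `‖x - x'‖₀ ≤ d` and every class `c' ≠ c`: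
`p_{c'}(x') ≤ 1 - p + Δ < 1/2 < p_c(x')`, so the smoothed classifier's argmax at `x'` is `c`. -/
theorem stmt_14 {W Y : Type} [DecidableEq W] [DecidableEq Y] [Fintype Y]
    (m : ℕ) (hm : Fintype.card Y = m) (hm2 : 2 ≤ m)
    (p : ℚ) (h k d : ℕ) (hk : k ≤ h) (hd : d ≤ h)
    (f : (Fin h → Option W) → Y) (c : Y) (x : Fin h → W)
    (hΔ : p - (1 - (Nat.choose (h - d) k : ℚ) / (Nat.choose h k : ℚ)) > 1 / 2)
    (hpc : p ≤ (((Finset.powersetCard k (Finset.univ : Finset (Fin h))).filter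
        (fun H => f (maskText x H) = c)).card : ℚ) /
        ((Finset.powersetCard k (Finset.univ : Finset (Fin h))).card : ℚ)) :
    ∀ x' : Fin h → W, (Finset.univ.filter (fun i => x i ≠ x' i)).card ≤ d →
      ∀ c' : Y, c' ≠ c →
        (((Finset.powersetCard k (Finset.univ : Finset (Fin h))).filter
            (fun H => f (maskText x' H) = c')).card : ℚ) /
            ((Finset.powersetCard k (Finset.univ : Finset (Fin h))).card : ℚ)
          ≤ 1 - p + (1 - (Nat.choose (h - d) k : ℚ) / (Nat.choose h k : ℚ)) ∧
        1 - p + (1 - (Nat.choose (h - d) k : ℚ) / (Nat.choose h k : ℚ)) < 1 / 2 ∧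
        (1 : ℚ) / 2 < (((Finset.powersetCard k (Finset.univ : Finset (Fin h))).filter
            (fun H => f (maskText x' H) = c)).card : ℚ) /
            ((Finset.powersetCard k (Finset.univ : Finset (Fin h))).card : ℚ) := by
  intro x' hx' c' hc'
  set S : Finset (Finset (Fin h)) := Finset.powersetCard k (Finset.univ : Finset (Fin h)) with hS
  have hN : S.card = h.choose k := by
    simp [hS, Finset.card_powersetCard]
  have hNpos : 0 < h.choose k := Nat.choose_pos hk
  have hNq : (0 : ℚ) < (h.choose k : ℚ) := by exact_mod_cast hNpos
  set D : Finset (Fin h) := Finset.univ.filter (fun i => x i ≠ x' i) with hDdef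
  -- the set of "good" masks
  set E : Finset (Finset (Fin h)) := S.filter (fun H => ∀ i ∈ H, x i = x' i) with hE
  have hEsub : E ⊆ S := Finset.filter_subset _ _
  -- E as powersetCard of Dᶜ
  have hEcard : E = Finset.powersetCard k Dᶜ := by
    ext H
    simp only [hE, hS, Finset.mem_filter, Finset.mem_powersetCard, Finset.subset_univ,
      true_and, hDdef]
    constructor
    · rintro ⟨hHk, hall⟩
      refine ⟨fun i hi => ?_, hHk⟩
      simp [Finset.mem_compl, hDdef, hall i hi]
    · rintro ⟨hsub, hHk⟩
      refine ⟨hHk, fun i hi => ?_⟩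
      have := hsub hi
      simp [Finset.mem_compl, hDdef] at this
      exact this
  have hDcard : D.card ≤ d := hx'
  have hEge : (h - d).choose k ≤ E.card := by
    rw [hEcard, Finset.card_powersetCard]
    apply Nat.choose_le_choose
    have : Dᶜ.card = h - D.card := by
      rw [Finset.card_compl]
      simp
    rw [this]
    exact Nat.sub_le_sub_left hDcard h
  -- masks agree on E
  have hmask : ∀ H ∈ E, maskText x H = maskText x' H := by
    intro H hH
    simp only [hE, Finset.mem_filter] at hH
    funext i
    unfold maskText
    by_cases hi : i ∈ H
    · simp [hi, hH.2 i hi]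
    · simp [hi]
  set A : Finset (Finset (Fin h)) := S.filter (fun H => f (maskText x H) = c) with hA
  set A' : Finset (Finset (Fin h)) := S.filter (fun H => f (maskText x' H) = c) with hA'
  set B' : Finset (Finset (Fin h)) := S.filter (fun H => f (maskText x' H) = c') with hB'
  have hkey : A ⊆ A' ∪ (S \ E) := by
    intro H hH
    simp only [hA, Finset.mem_filter] at hH
    by_cases hHE : H ∈ E
    · apply Finset.mem_union_left
      simp only [hA', Finset.mem_filter]
      exact ⟨hH.1, by rw [← hmask H hHE]; exact hH.2⟩
    · exact Finset.mem_union_right _ (Finset.mem_sdiff.mpr ⟨hH.1, hHE⟩)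
  have h1 : A.card ≤ A'.card + (S.card - E.card) := by
    calc A.card ≤ (A' ∪ (S \ E)).card := Finset.card_le_card hkey
    _ ≤ A'.card + (S \ E).card := Finset.card_union_le _ _
    _ = A'.card + (S.card - E.card) := by rw [Finset.card_sdiff_of_subset hEsub]
  have h2 : A'.card + B'.card ≤ S.card := by
    have hdisj : Disjoint A' B' := by
      rw [hA', hB']
      refine Finset.disjoint_filter.mpr (fun H _ h1 h2 => hc' (h2 ▸ h1.symm ▸ rfl))
    calc A'.card + B'.card = (A' ∪ B').card := (Finset.card_union_of_disjoint hdisj).symm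
    _ ≤ S.card := Finset.card_le_card (Finset.union_subset (Finset.filter_subset _ _) (Finset.filter_subset _ _))
  -- move to ℚ
  have hEle : E.card ≤ S.card := Finset.card_le_card hEsub
  have h1q : (A.card : ℚ) ≤ A'.card + ((h.choose k : ℚ) - E.card) := by
    rw [hN] at h1 hEle
    calc (A.card : ℚ) ≤ ((A'.card + (h.choose k - E.card) : ℕ) : ℚ) := by exact_mod_cast h1
    _ = A'.card + ((h.choose k : ℚ) - E.card) := by push_cast [Nat.cast_sub hEle]; ring
  have h2q : (A'.card : ℚ) + B'.card ≤ (h.choose k : ℚ) := by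
    rw [← hN]; exact_mod_cast h2
  have h3q : ((h - d).choose k : ℚ) ≤ E.card := by exact_mod_cast hEge
  rw [hN] at hpc ⊢
  have hpq : p * (h.choose k : ℚ) ≤ A.card := by
    rw [le_div_iff₀ hNq] at hpc; exact hpc
  set Δ : ℚ := 1 - ((h - d).choose k : ℚ) / (h.choose k : ℚ) with hΔdef
  have hkey2 : (p - Δ) * (h.choose k : ℚ) ≤ A'.card := by
    have hcancel : ((h - d).choose k : ℚ) / (h.choose k : ℚ) * (h.choose k : ℚ)
        = ((h - d).choose k : ℚ) := div_mul_cancel₀ _ (ne_of_gt hNq)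
    have hΔN : Δ * (h.choose k : ℚ) = (h.choose k : ℚ) - ((h - d).choose k : ℚ) := by
      rw [hΔdef, sub_mul, one_mul, hcancel]
    have hexp : (p - Δ) * (h.choose k : ℚ) = p * (h.choose k : ℚ) - Δ * (h.choose k : ℚ) :=
      sub_mul _ _ _
    linarith
  have hring : (1 - p + Δ) * (h.choose k : ℚ)
      = (h.choose k : ℚ) - (p - Δ) * (h.choose k : ℚ) := by ring
  have hmul : (1 / 2 : ℚ) * (h.choose k : ℚ) < (p - Δ) * (h.choose k : ℚ) :=
    mul_lt_mul_of_pos_right hΔ hNq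
  refine ⟨?_, by linarith, ?_⟩
  · rw [div_le_iff₀ hNq]
    linarith
  · rw [lt_div_iff₀ hNq]
    exact lt_of_lt_of_le hmul hkey2
end
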